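/- arXiv:2211.10836 — 6 statements merged into one kernel-verified Lean document; each statement's English description precedes it below -/
import Mathlib

section
/- Let k ≥ 2 and let β_1, …, β_k be complex numbers such that Re β_j < 0 and |Re β_j| > |Im β_j| for every j, and such that the multiset {β_1,…,β_k} is invariant under complex conjugation. Then the elementary symmetric values e_{k−1} and e_k of β_1,…,β_k are real, the numbers τ_{k−1} := (−1)^{k−1} e_{k−1} and τ_k := (−1)^k e_k are positive, and every β_m satisfies |β_m| ≥ τ_k/(√2 · τ_{k−1}). -/
/-!
Put `α_j = -β_j`; these lie in the open sector `|Im α| < Re α` and `τ_ℓ = e_ℓ(α)`, so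
`τ_k = ∏ α_j` and `τ_{k-1} = τ_k ∑ α_j⁻¹`. Pairing each non-real `α_j` with its conjugate
(`α * conj α = ‖α‖²`) shows that `∏ α_j` is a positive real. In the sector
`Re α⁻¹ = Re α / ‖α‖² ≥ 1 / (√2 ‖α‖)`, and all these real parts are positive, hence
`τ_k / τ_{k-1} = 1 / Re ∑ α_j⁻¹ ≤ √2 ‖β_m‖` for every `m`.
-/

open ComplexConjugate ComplexOrder

namespace Multiset

section CommSemiring

variable {R : Type*} [CommSemiring R]

lemma map_esymm {S : Type*} [CommSemiring S] (f : R →+* S) (s : Multiset R) (n : ℕ) :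
    f (s.esymm n) = (s.map f).esymm n := by
  simp only [esymm, map_multiset_sum, map_multiset_prod, powersetCard_map, map_map,
    Function.comp_def]

@[simp]
lemma esymm_zero (s : Multiset R) : s.esymm 0 = 1 := by
  simp [esymm, powersetCard_zero_left]

lemma esymm_eq_zero_of_card_lt {s : Multiset R} {n : ℕ} (h : card s < n) : s.esymm n = 0 := by
  simp [esymm, powersetCard_eq_empty _ h]

lemma esymm_cons_succ (a : R) (s : Multiset R) (n : ℕ) :
    (a ::ₘ s).esymm (n + 1) = s.esymm (n + 1) + a * s.esymm n := by
  simp [esymm, powersetCard_cons, map_map, sum_map_mul_left]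

lemma esymm_card (s : Multiset R) : s.esymm (card s) = s.prod := by
  induction s using Multiset.induction with
  | empty => simp
  | cons a s ih =>
    rw [card_cons, esymm_cons_succ, ih, prod_cons, esymm_eq_zero_of_card_lt (Nat.lt_succ_self _),
      zero_add]

end CommSemiring

lemma esymm_eq_prod_mul_sum_inv {K : Type*} [Field K] {s : Multiset K} (hs : (0 : K) ∉ s)
    {n : ℕ} (hn : card s = n + 1) : s.esymm n = s.prod * (s.map (·⁻¹)).sum := by
  induction s using Multiset.induction generalizing n with
  | empty => simp at hn
  | cons a s ih =>
    have ha : a ≠ 0 := fun h => hs (h ▸ mem_cons_self a s)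
    rw [card_cons, add_left_inj] at hn
    subst hn
    cases h : card s with
    | zero => simp_all [card_eq_zero.1 h]
    | succ n =>
      rw [esymm_cons_succ, ← h, esymm_card, ih (fun h0 => hs (mem_cons_of_mem h0)) h,
        prod_cons, map_cons, sum_cons]
      field_simp

end Multiset

namespace Complex

lemma esymm_im_eq_zero {s : Multiset ℂ} (hs : s.map conj = s) (n : ℕ) : (s.esymm n).im = 0 :=
  conj_eq_iff_im.1 (by rw [Multiset.map_esymm, hs])

lemma multiset_prod_pos_of_map_conj_eq {s : Multiset ℂ} (hs : s.map conj = s)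
    (hreal : ∀ z ∈ s, z.im = 0 → 0 < z.re) : 0 < s.prod := by
  induction s using Multiset.strongInductionOn with
  | ih s ih =>
  rcases s.empty_or_exists_mem with rfl | ⟨z, hz⟩
  · simp
  obtain ⟨t, rfl⟩ := Multiset.exists_cons_of_mem hz
  by_cases him : z.im = 0
  · have hzc : conj z = z := conj_eq_iff_im.2 him
    rw [Multiset.map_cons, hzc, Multiset.cons_inj_right] at hs
    rw [Multiset.prod_cons]
    exact mul_pos (pos_iff.2 ⟨hreal z hz him, him.symm⟩)
      (ih t (Multiset.lt_cons_self t z) hs fun w hw => hreal w (Multiset.mem_cons_of_mem hw))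
  · have hzc : conj z ∈ t := by
      have : conj z ∈ z ::ₘ t := hs ▸ Multiset.mem_map_of_mem _ hz
      exact (Multiset.mem_cons.1 this).resolve_left (mt conj_eq_iff_im.1 him)
    obtain ⟨u, rfl⟩ := Multiset.exists_cons_of_mem hzc
    rw [Multiset.map_cons, Multiset.map_cons, conj_conj, Multiset.cons_swap,
      Multiset.cons_inj_right, Multiset.cons_inj_right] at hs
    have hu : u < z ::ₘ conj z ::ₘ u :=
      (Multiset.lt_cons_self u _).trans (Multiset.lt_cons_self _ z)
    rw [Multiset.prod_cons, Multiset.prod_cons, ← mul_assoc, mul_conj]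
    refine mul_pos ?_ (ih u hu hs fun w hw => hreal w (by simp [hw]))
    exact_mod_cast normSq_pos.2 fun h0 => him (by simp [h0])

lemma inv_sqrt_two_mul_norm_le_re_inv {z : ℂ} (h : |z.im| ≤ z.re) :
    (√2 * ‖z‖)⁻¹ ≤ (z⁻¹).re := by
  rcases eq_or_ne z 0 with rfl | hz
  · simp
  have hnorm : 0 < ‖z‖ := norm_pos_iff.2 hz
  have hle : ‖z‖ ≤ √2 * z.re := by
    rw [norm_def, ← Real.sqrt_sq (h.trans' (abs_nonneg _)), ← Real.sqrt_mul zero_le_two]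
    refine Real.sqrt_le_sqrt ?_
    rw [normSq_apply]
    nlinarith [sq_abs z.im, abs_nonneg z.im]
  calc (√2 * ‖z‖)⁻¹ = ‖z‖ / (√2 * ‖z‖ ^ 2) := by field_simp
    _ ≤ √2 * z.re / (√2 * ‖z‖ ^ 2) := by gcongr
    _ = (z⁻¹).re := by rw [inv_re, normSq_eq_norm_sq]; field_simp

lemma re_inv_le_re_sum_inv {t : Multiset ℂ} (ht : ∀ z ∈ t, 0 ≤ z.re) {z : ℂ} (hz : z ∈ t) :
    (z⁻¹).re ≤ (t.map (·⁻¹)).sum.re := by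
  rw [← coe_reAddGroupHom, map_multiset_sum, Multiset.map_map]
  refine Multiset.single_le_sum (fun x hx => ?_) _ (Multiset.mem_map_of_mem _ hz)
  obtain ⟨w, hw, rfl⟩ := Multiset.mem_map.1 hx
  simpa only [Function.comp_apply, coe_reAddGroupHom, inv_re] using
    div_nonneg (ht w hw) (normSq_nonneg w)

section Sector

variable {t : Multiset ℂ} (hconj : t.map conj = t) (hsector : ∀ z ∈ t, |z.im| < z.re)
include hsector

lemma re_pos_of_sector {z : ℂ} (hz : z ∈ t) : 0 < z.re :=
  (abs_nonneg _).trans_lt (hsector z hz)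

lemma ne_zero_of_sector {z : ℂ} (hz : z ∈ t) : z ≠ 0 := by
  rintro rfl
  simpa using re_pos_of_sector hsector hz

include hconj in
lemma prod_pos_of_sector : 0 < t.prod :=
  multiset_prod_pos_of_map_conj_eq hconj fun _ hz _ => re_pos_of_sector hsector hz

lemma inv_sqrt_two_mul_norm_le_re_sum_inv {z : ℂ} (hz : z ∈ t) :
    (√2 * ‖z‖)⁻¹ ≤ (t.map (·⁻¹)).sum.re :=
  (inv_sqrt_two_mul_norm_le_re_inv (hsector z hz).le).trans
    (re_inv_le_re_sum_inv (fun _ hw => (re_pos_of_sector hsector hw).le) hz)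

include hconj in
lemma re_esymm_of_card_eq_succ {n : ℕ} (hn : Multiset.card t = n + 1) :
    (t.esymm n).re = t.prod.re * (t.map (·⁻¹)).sum.re := by
  have h0 : (0 : ℂ) ∉ t := fun h => ne_zero_of_sector hsector h rfl
  rw [Multiset.esymm_eq_prod_mul_sum_inv h0 hn, mul_re,
    ← (pos_iff.1 (prod_pos_of_sector hconj hsector)).2, zero_mul, sub_zero]

include hconj in
lemma re_esymm_pos_of_card_eq_succ {n : ℕ} (hn : Multiset.card t = n + 1) :
    0 < (t.esymm n).re := by
  obtain ⟨z, hz⟩ := (Multiset.card_pos_iff_exists_mem (s := t)).1 (by omega)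
  have hz0 := norm_pos_iff.2 (ne_zero_of_sector hsector hz)
  rw [re_esymm_of_card_eq_succ hconj hsector hn]
  exact mul_pos (pos_iff.1 (prod_pos_of_sector hconj hsector)).1
    ((inv_sqrt_two_mul_norm_le_re_sum_inv hsector hz).trans_lt' (by positivity))

include hconj in
lemma re_esymm_div_le_norm {n : ℕ} (hn : Multiset.card t = n + 1) {z : ℂ} (hz : z ∈ t) :
    (t.esymm (n + 1)).re / (√2 * (t.esymm n).re) ≤ ‖z‖ := by
  have hP := (pos_iff.1 (prod_pos_of_sector hconj hsector)).1
  have hS := inv_sqrt_two_mul_norm_le_re_sum_inv hsector hz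
  have hz0 := norm_pos_iff.2 (ne_zero_of_sector hsector hz)
  have hτ := re_esymm_pos_of_card_eq_succ hconj hsector hn
  rw [inv_le_iff_one_le_mul₀ (by positivity)] at hS
  rw [← hn, Multiset.esymm_card, div_le_iff₀ (by positivity),
    re_esymm_of_card_eq_succ hconj hsector hn]
  nlinarith

end Sector

end Complex

theorem stmt3_general (k : ℕ) (β : Fin k → ℂ)
    (hre : ∀ j, (β j).re < 0) (hdom : ∀ j, |(β j).im| < |(β j).re|)
    (hconj : (Finset.univ.val.map β).map (starRingEnd ℂ) = Finset.univ.val.map β)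
    (τ : ℕ → ℂ)
    (hτ : ∀ ℓ, τ ℓ = (-1 : ℂ) ^ ℓ * (Finset.univ.val.map β).esymm ℓ) :
    ((Finset.univ.val.map β).esymm (k - 1)).im = 0 ∧
    ((Finset.univ.val.map β).esymm k).im = 0 ∧
    0 < (τ (k - 1)).re ∧ 0 < (τ k).re ∧
    ∀ m, (τ k).re / (Real.sqrt 2 * (τ (k - 1)).re) ≤ ‖β m‖ := by
  cases k with
  | zero => simp [hτ]
  | succ n =>
    set α := (Finset.univ.val.map β).map Neg.neg
    have hτα : ∀ ℓ, τ ℓ = α.esymm ℓ := fun ℓ => by rw [hτ, Multiset.esymm_neg]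
    have hcard : Multiset.card α = n + 1 := by simp [α]
    have hαconj : α.map (starRingEnd ℂ) = α :=
      calc α.map conj = ((Finset.univ.val.map β).map (starRingEnd ℂ)).map Neg.neg := by
            simp only [α, Multiset.map_map, Function.comp_def, map_neg]
        _ = α := by rw [hconj]
    have hsector : ∀ z ∈ α, |z.im| < z.re := by
      simp only [α, Multiset.map_map, Multiset.mem_map, Finset.mem_val, Finset.mem_univ, true_and]
      rintro _ ⟨j, rfl⟩
      simpa [abs_of_neg (hre j)] using hdom j
    simp only [Nat.add_sub_cancel, hτα]
    refine ⟨Complex.esymm_im_eq_zero hconj _, Complex.esymm_im_eq_zero hconj _,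
      Complex.re_esymm_pos_of_card_eq_succ hαconj hsector hcard, ?_, fun m => ?_⟩
    · rw [← hcard, Multiset.esymm_card]
      exact (Complex.pos_iff.1 (Complex.prod_pos_of_sector hαconj hsector)).1
    · simpa using Complex.re_esymm_div_le_norm hαconj hsector hcard (z := -β m)
        (Multiset.mem_map_of_mem _ (Multiset.mem_map_of_mem _ (Finset.mem_univ m)))

/-- For `k ≥ 2` complex numbers `β₁,…,β_k` with negative real parts dominating
the imaginary parts, whose multiset is invariant under complex conjugation:
the elementary symmetric values `e_{k-1}` and `e_k` are real,
`τ_{k-1} := (-1)^{k-1} e_{k-1}` and `τ_k := (-1)^k e_k` are positive, and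
every `β_m` satisfies `|β_m| ≥ τ_k / (√2 τ_{k-1})`. -/
theorem stmt3 (k : ℕ) (hk : 2 ≤ k) (β : Fin k → ℂ)
    (hre : ∀ j, (β j).re < 0) (hdom : ∀ j, |(β j).im| < |(β j).re|)
    (hconj : (Finset.univ.val.map β).map (starRingEnd ℂ) = Finset.univ.val.map β)
    (τ : ℕ → ℂ)
    (hτ : ∀ ℓ, τ ℓ = (-1 : ℂ) ^ ℓ * (Finset.univ.val.map β).esymm ℓ) :
    ((Finset.univ.val.map β).esymm (k - 1)).im = 0 ∧
    ((Finset.univ.val.map β).esymm k).im = 0 ∧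
    0 < (τ (k - 1)).re ∧ 0 < (τ k).re ∧
    ∀ m, (τ k).re / (Real.sqrt 2 * (τ (k - 1)).re) ≤ ‖β m‖ :=
  stmt3_general k β hre hdom hconj τ hτ
end

section
/- Let z be a complex number with Re z < 0 and Im z ≠ 0, and let λ_3 be a real number with λ_3 < 0 and |λ_3| < |Re z|. Set σ_1 := −(2·Re z + λ_3), σ_2 := |z|² + 2λ_3·Re z, σ_3 := −λ_3·|z|² (the coefficients of the real cubic with roots z, conj(z), λ_3). Then σ_1σ_2/σ_3 − 7 ≤ (2·Re z)/λ_3 ≤ σ_1σ_2/σ_3 + 1. -/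
/-- For a complex conjugate pair `z, conj z` with `Re z < 0`, `Im z ≠ 0`,
and a real `λ₃ < 0` with `|λ₃| < |Re z|`, with `σ₁, σ₂, σ₃` the coefficients
of the real cubic with roots `z, conj z, λ₃`, one has
`σ₁σ₂/σ₃ - 7 ≤ 2 Re z / λ₃ ≤ σ₁σ₂/σ₃ + 1`. -/
theorem stmt6 (z : ℂ) (hzre : z.re < 0) (hzim : z.im ≠ 0)
    (lam3 : ℝ) (h3 : lam3 < 0) (h3abs : |lam3| < |z.re|)
    (σ1 σ2 σ3 : ℝ)
    (hσ1 : σ1 = -(2 * z.re + lam3))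
    (hσ2 : σ2 = Complex.normSq z + 2 * lam3 * z.re)
    (hσ3 : σ3 = -(lam3 * Complex.normSq z)) :
    σ1 * σ2 / σ3 - 7 ≤ 2 * z.re / lam3 ∧
    2 * z.re / lam3 ≤ σ1 * σ2 / σ3 + 1 := by
  subst hσ1 hσ2 hσ3
  have hz : z ≠ 0 := fun h => hzim (by simp [h])
  have hn : 0 < Complex.normSq z := Complex.normSq_pos.mpr hz
  have hlam : z.re < lam3 := by
    rw [abs_of_neg h3, abs_of_neg hzre] at h3abs; linarith
  have hn' : z.re ^ 2 ≤ Complex.normSq z := by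
    rw [Complex.normSq_apply]; nlinarith [sq_nonneg z.im]
  have key : -(2 * z.re + lam3) * (Complex.normSq z + 2 * lam3 * z.re) /
      -(lam3 * Complex.normSq z) - 2 * z.re / lam3
      = 1 + 2 * z.re * (2 * z.re + lam3) / Complex.normSq z := by
    field_simp [h3.ne, hn.ne']
    ring
  have hpos : 0 ≤ 2 * z.re * (2 * z.re + lam3) / Complex.normSq z := by
    apply div_nonneg _ hn.le
    nlinarith
  have hub : 2 * z.re * (2 * z.re + lam3) / Complex.normSq z ≤ 6 := by
    rw [div_le_iff₀ hn]
    nlinarith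
  constructor <;> linarith
end

section
/- Let γ > 0 and κ > 0, and let V : ℝ → ℝ be differentiable with V(t) ≥ 0 for all t ≥ 0 and V′(t) ≤ −2γ·V(t) + 2κ·√(V(t)) for all t ≥ 0. Then for all t ≥ 0, V(t) ≤ V(0)·exp(−γt) + (κ/γ)²·(1 − exp(−γt)). -/
/-! By AM-GM, `2κ√V ≤ γV + κ²/γ`, so `V` is a subsolution of the linear equation
`u' = -γu + κ²/γ`, and Grönwall's inequality bounds it by the solution of that equation
with the same initial value. -/

open Real

theorem two_mul_mul_sqrt_le {γ : ℝ} (hγ : 0 < γ) (κ : ℝ) {v : ℝ} (hv : 0 ≤ v) :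
    2 * κ * √v ≤ γ * v + κ ^ 2 / γ := by
  have hsq : √v ^ 2 = v := sq_sqrt hv
  rw [← mul_le_mul_iff_right₀ hγ, mul_add, mul_div_cancel₀ _ hγ.ne']
  linear_combination sq_nonneg (γ * √v - κ) + γ ^ 2 * hsq

theorem le_gronwallBound_of_deriv_le {f : ℝ → ℝ} {K ε a : ℝ} (hf : Differentiable ℝ f)
    (bound : ∀ x, a ≤ x → deriv f x ≤ K * f x + ε) {x : ℝ} (hx : a ≤ x) :
    f x ≤ gronwallBound (f a) K ε (x - a) :=
  le_gronwallBound_of_liminf_deriv_right_le hf.continuous.continuousOn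
    (fun y _ _ hr => (hf y).hasDerivAt.hasDerivWithinAt.liminf_right_slope_le hr) le_rfl
    (fun y hy => bound y hy.1) x ⟨hx, le_rfl⟩

theorem stmt10_general (γ κ : ℝ) (hγ : 0 < γ)
    (V : ℝ → ℝ) (hV : Differentiable ℝ V)
    (hVnn : ∀ t, 0 ≤ t → 0 ≤ V t)
    (hV' : ∀ t, 0 ≤ t → deriv V t ≤ -2 * γ * V t + 2 * κ * Real.sqrt (V t)) :
    ∀ t, 0 ≤ t →
      V t ≤ V 0 * Real.exp (-γ * t) + (κ / γ) ^ 2 * (1 - Real.exp (-γ * t)) := by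
  intro t ht
  have linear_bound : ∀ s, 0 ≤ s → deriv V s ≤ -γ * V s + κ ^ 2 / γ := fun s hs => by
    linarith [hV' s hs, two_mul_mul_sqrt_le hγ κ (hVnn s hs)]
  calc V t ≤ gronwallBound (V 0) (-γ) (κ ^ 2 / γ) (t - 0) :=
        le_gronwallBound_of_deriv_le hV linear_bound ht
    _ = V 0 * exp (-γ * t) + (κ / γ) ^ 2 * (1 - exp (-γ * t)) := by
        rw [gronwallBound_of_K_ne_0 (neg_ne_zero.mpr hγ.ne'), sub_zero]
        field_simp
        ring

/-- Lyapunov comparison estimate: if `V ≥ 0` on `[0,∞)` is differentiable and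
satisfies `V' ≤ -2γV + 2κ√V` there, then
`V(t) ≤ V(0) e^{-γt} + (κ/γ)² (1 - e^{-γt})` for all `t ≥ 0`. -/
theorem stmt10 (γ κ : ℝ) (hγ : 0 < γ) (hκ : 0 < κ)
    (V : ℝ → ℝ) (hV : Differentiable ℝ V)
    (hVnn : ∀ t, 0 ≤ t → 0 ≤ V t)
    (hV' : ∀ t, 0 ≤ t → deriv V t ≤ -2 * γ * V t + 2 * κ * Real.sqrt (V t)) :
    ∀ t, 0 ≤ t →
      V t ≤ V 0 * Real.exp (-γ * t) + (κ / γ) ^ 2 * (1 - Real.exp (-γ * t)) :=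
  stmt10_general γ κ hγ V hV hVnn hV'
end

section
/- Let e_0, i_0, k_1, k_{−1}, k_2, k_3, k_{−3} be positive real numbers. Then for all s ≥ 0: (k_1k_2e_0k_{−3}·(k_1s + k_{−1}+k_2+k_3i_0+k_{−3})) / (k_1s(k_3i_0+k_{−3}) + (k_{−1}+k_2)k_{−3})² ≤ (k_1k_2e_0·(k_{−1}+k_2+k_3i_0+k_{−3})) / ((k_{−1}+k_2)²·k_{−3}); that is, the function s ↦ σ̂_3·σ_1(s)/σ_2(s)² attains its maximum on [0,∞) at s = 0. -/
/-- Uncompetitive inhibition: the function `s ↦ σ̂₃ σ₁(s)/σ₂(s)²` attains its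
maximum on `[0,∞)` at `s = 0`. -/
theorem stmt17 (e0 i0 k1 km1 k2 k3 km3 : ℝ)
    (he0 : 0 < e0) (hi0 : 0 < i0) (hk1 : 0 < k1) (hkm1 : 0 < km1)
    (hk2 : 0 < k2) (hk3 : 0 < k3) (hkm3 : 0 < km3) :
    ∀ s : ℝ, 0 ≤ s →
      k1 * k2 * e0 * km3 * (k1 * s + km1 + k2 + k3 * i0 + km3) /
          (k1 * s * (k3 * i0 + km3) + (km1 + k2) * km3) ^ 2 ≤
        k1 * k2 * e0 * (km1 + k2 + k3 * i0 + km3) /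
          ((km1 + k2) ^ 2 * km3) := by
  intro s hs
  have hd1 : (0:ℝ) < (k1 * s * (k3 * i0 + km3) + (km1 + k2) * km3) ^ 2 := by positivity
  have hd2 : (0:ℝ) < (km1 + k2) ^ 2 * km3 := by positivity
  rw [div_le_div_iff₀ hd1 hd2]
  have hA : (0:ℝ) ≤ k1 * s := by positivity
  have hK : (0:ℝ) < k1 * k2 * e0 := by positivity
  have hB : (0:ℝ) < km1 + k2 := by positivity
  have hC : (0:ℝ) < k3 * i0 + km3 := by positivity
  have hCD : km3 ≤ k3 * i0 + km3 := by nlinarith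
  have inner : 0 ≤ ((km1 + k2) + (k3 * i0 + km3)) * (k1 * s) * (k3 * i0 + km3) ^ 2
      + 2 * (km1 + k2) * (k3 * i0 + km3) * km3 * ((km1 + k2) + (k3 * i0 + km3))
      - (km1 + k2) ^ 2 * km3 ^ 2 := by
    nlinarith [mul_nonneg (mul_nonneg (add_pos hB hC).le hA) (sq_nonneg (k3 * i0 + km3)),
      mul_le_mul_of_nonneg_left hCD (mul_pos (mul_pos hB hkm3) hB).le,
      mul_pos (mul_pos hB hkm3) (mul_pos hB hC)]
  nlinarith [mul_nonneg (mul_nonneg hK.le hA) inner]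
end

section
/- Let e_0, i_0, k_1, k_{−1}, k_2, k_3, k_{−3} be positive real numbers satisfying 2k_{−3}(k_3i_0+k_{−3}) + k_{−3}(k_{−1}+k_2) ≥ (k_{−1}+k_2)·i_0k_3. Then for all s ≥ 0: (k_1k_2e_0(k_3i_0+k_{−3})·(k_1s + k_{−1}+k_2+k_3i_0+k_{−3})) / (k_{−3}k_1s + (k_3i_0+k_{−3})(k_{−1}+k_2))² ≤ (k_1k_2e_0·(k_{−1}+k_2+k_3i_0+k_{−3})) / ((k_{−1}+k_2)²·(k_3i_0+k_{−3})); that is, the function s ↦ σ̂_3·σ_1(s)/σ_2(s)² attains its maximum on [0,∞) at s = 0. -/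
/-- Competitive inhibition, case where condition (A) holds: the function
`s ↦ σ̂₃ σ₁(s)/σ₂(s)²` attains its maximum on `[0,∞)` at `s = 0`. -/
theorem stmt18 (e0 i0 k1 km1 k2 k3 km3 : ℝ)
    (he0 : 0 < e0) (hi0 : 0 < i0) (hk1 : 0 < k1) (hkm1 : 0 < km1)
    (hk2 : 0 < k2) (hk3 : 0 < k3) (hkm3 : 0 < km3)
    (hcond : 2 * km3 * (k3 * i0 + km3) + km3 * (km1 + k2) ≥
      (km1 + k2) * (i0 * k3)) :
    ∀ s : ℝ, 0 ≤ s →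
      k1 * k2 * e0 * (k3 * i0 + km3) * (k1 * s + km1 + k2 + k3 * i0 + km3) /
          (km3 * k1 * s + (k3 * i0 + km3) * (km1 + k2)) ^ 2 ≤
        k1 * k2 * e0 * (km1 + k2 + k3 * i0 + km3) /
          ((km1 + k2) ^ 2 * (k3 * i0 + km3)) := by
  intro s hs
  have ha : 0 < k3 * i0 + km3 := by positivity
  have hb : 0 < km1 + k2 := by positivity
  have hd : 0 < km3 * k1 * s + (k3 * i0 + km3) * (km1 + k2) := by positivity
  rw [div_le_div_iff₀ (by positivity) (by positivity)]
  have hkey : (0:ℝ) ≤ 2*km3*((km1+k2)+(k3*i0+km3)) - (k3*i0+km3)*(km1+k2) := by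
    nlinarith
  have ht : 0 ≤ k1 * s := by positivity
  nlinarith [mul_nonneg (mul_nonneg ht (mul_pos ha hb).le) hkey,
    mul_nonneg (mul_nonneg (mul_nonneg ht ht) (sq_nonneg km3)) (by positivity : (0:ℝ) ≤ km1+k2+(k3*i0+km3)),
    mul_pos (mul_pos (mul_pos hk1 hk2) he0) ha]
end

section
/- Let e_0, i_0, k_1, k_{−1}, k_2, k_3, k_{−3} be positive real numbers satisfying k_3i_0(k_{−1}+k_2) > k_{−3}(k_{−1}+k_2) + 2k_{−3}(k_3i_0+k_{−3}). Let g(s) := (k_1k_2e_0(k_3i_0+k_{−3})·(k_1s + k_{−1}+k_2+k_3i_0+k_{−3})) / (k_{−3}k_1s + (k_3i_0+k_{−3})(k_{−1}+k_2))². Then for all s ≥ 0: g(s) ≤ (k_1k_2e_0·(k_3i_0+k_{−3})) / (4k_{−3}·(k_3i_0(k_{−1}+k_2) − k_{−3}(k_3i_0+k_{−3}))), and this bound is attained at s* = ((k_3i_0+k_{−3})(k_{−1}+k_2) − 2k_{−3}(k_{−1}+k_2+k_3i_0+k_{−3}))/(k_{−3}k_1), which is a positive real number. -/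
/-- Competitive inhibition, case where condition (A) fails strictly: the
function `g(s) = σ̂₃ σ₁(s)/σ₂(s)²` is bounded on `[0,∞)` by the stated value,
which is attained at the positive point `s*`. -/
theorem stmt19 (e0 i0 k1 km1 k2 k3 km3 : ℝ)
    (he0 : 0 < e0) (hi0 : 0 < i0) (hk1 : 0 < k1) (hkm1 : 0 < km1)
    (hk2 : 0 < k2) (hk3 : 0 < k3) (hkm3 : 0 < km3)
    (hcond : k3 * i0 * (km1 + k2) >
      km3 * (km1 + k2) + 2 * km3 * (k3 * i0 + km3))
    (g : ℝ → ℝ)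
    (hg : ∀ s, g s =
      k1 * k2 * e0 * (k3 * i0 + km3) * (k1 * s + km1 + k2 + k3 * i0 + km3) /
        (km3 * k1 * s + (k3 * i0 + km3) * (km1 + k2)) ^ 2)
    (sstar : ℝ)
    (hsstar : sstar =
      ((k3 * i0 + km3) * (km1 + k2) -
          2 * km3 * (km1 + k2 + k3 * i0 + km3)) / (km3 * k1)) :
    (∀ s : ℝ, 0 ≤ s →
      g s ≤ k1 * k2 * e0 * (k3 * i0 + km3) /
        (4 * km3 * (k3 * i0 * (km1 + k2) - km3 * (k3 * i0 + km3)))) ∧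
    0 < sstar ∧
    g sstar = k1 * k2 * e0 * (k3 * i0 + km3) /
      (4 * km3 * (k3 * i0 * (km1 + k2) - km3 * (k3 * i0 + km3))) := by
  have hE : 0 < k3 * i0 * (km1 + k2) - km3 * (k3 * i0 + km3) := by
    nlinarith [mul_pos hkm3 (by positivity : (0:ℝ) < km1 + k2),
      mul_pos hkm3 (by positivity : (0:ℝ) < k3 * i0 + km3)]
  have hC : 0 < k1 * k2 * e0 * (k3 * i0 + km3) := by positivity
  have hden2 : 0 < 4 * km3 * (k3 * i0 * (km1 + k2) - km3 * (k3 * i0 + km3)) := by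
    positivity
  refine ⟨?_, ?_, ?_⟩
  · intro s hs
    rw [hg]
    have hden1 : 0 < (km3 * k1 * s + (k3 * i0 + km3) * (km1 + k2)) ^ 2 := by
      have : 0 < km3 * k1 * s + (k3 * i0 + km3) * (km1 + k2) := by positivity
      positivity
    rw [div_le_div_iff₀ hden1 hden2]
    nlinarith [sq_nonneg (km3 * k1 * s + (k3 * i0 + km3) * (km1 + k2)
        - 2 * (k3 * i0 * (km1 + k2) - km3 * (k3 * i0 + km3))),
      mul_pos hC (mul_pos hkm3 hk1), hC.le,
      mul_nonneg (mul_nonneg hC.le (mul_pos hkm3 hk1).le) hs]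
  · rw [hsstar]
    apply div_pos
    · nlinarith
    · positivity
  · rw [hg, hsstar]
    have h1 : km3 * k1 ≠ 0 := by positivity
    have h2 : (km3 * k1 * (((k3 * i0 + km3) * (km1 + k2) -
        2 * km3 * (km1 + k2 + k3 * i0 + km3)) / (km3 * k1)) +
        (k3 * i0 + km3) * (km1 + k2)) =
        2 * (k3 * i0 * (km1 + k2) - km3 * (k3 * i0 + km3)) := by
      field_simp
      ring
    rw [h2]
    rw [div_eq_div_iff (by positivity) (ne_of_gt hden2)]
    field_simp
    ring
end
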